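/- Let V be a type and d : V → V → ℝ satisfy d(u,v) ≥ 0, d(u,v) = d(v,u), and d(u,w) ≤ d(u,v) + d(v,w) for all u, v, w. Let l : Fin K → V with K ≥ 1 be landmarks, let A : Fin m → Fin K → ℝ be row-stochastic with m ≥ 1, define compressed labels y i (v) = Σ_k A i k · d(l k, v), the compressed heuristic h_A(u,t) = max over i of |y i (u) − y i (t)|, and for T > 0 the smooth compressed heuristic h̃_A(u,t) = (1/T)·log(Σ_i exp(T · |y i (u) − y i (t)|)) − (log m)/T. Then for all u, t ∈ V: h̃_A(u,t) ≤ h_A(u,t) ≤ (max over k of |d(l k, u) − d(l k, t)|) ≤ d(u,t). -/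

import Mathlib

/-- Maximum of a real-valued function over `Fin K`, given `1 ≤ K`. -/
noncomputable def fmax {K : ℕ} (hK : 1 ≤ K) (f : Fin K → ℝ) : ℝ :=
  Finset.univ.sup' (Finset.univ_nonempty_iff.mpr ⟨⟨0, hK⟩⟩) f

/-!
Every term of the log-sum-exp is at most `exp (T * max)`, so the sum is at most
`m * exp (T * max)` and the shifted smooth maximum undershoots the true one. Each compressed
label difference is a convex combination of the landmark differences, hence bounded by their
largest absolute value, and each of those is at most `d u t` by the reverse triangle inequality.
-/

open Finset Real

lemma le_fmax {K : ℕ} (hK : 1 ≤ K) (f : Fin K → ℝ) (k : Fin K) : f k ≤ fmax hK f :=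
  le_sup' f (mem_univ k)

lemma fmax_le {K : ℕ} (hK : 1 ≤ K) {f : Fin K → ℝ} {M : ℝ} (h : ∀ k, f k ≤ M) :
    fmax hK f ≤ M :=
  sup'_le _ _ fun k _ => h k

lemma log_sum_exp_le_log_card_add {ι : Type*} {s : Finset ι} (hs : s.Nonempty) {g : ι → ℝ}
    {M : ℝ} (hg : ∀ i ∈ s, g i ≤ M) : log (∑ i ∈ s, exp (g i)) ≤ log #s + M := by
  have hsum : ∑ i ∈ s, exp (g i) ≤ #s * exp M := by
    simpa using sum_le_card_nsmul s _ _ fun i hi => exp_le_exp.mpr (hg i hi)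
  calc log (∑ i ∈ s, exp (g i))
      ≤ log (#s * exp M) := log_le_log (sum_pos (fun i _ => exp_pos _) hs) hsum
    _ = log #s + M := by
      rw [log_mul (by simpa using hs.ne_empty) (exp_ne_zero M), log_exp]

lemma log_sum_exp_div_sub_log_card_div_le {ι : Type*} {s : Finset ι} (hs : s.Nonempty)
    {f : ι → ℝ} {M : ℝ} (hf : ∀ i ∈ s, f i ≤ M) {T : ℝ} (hT : 0 < T) :
    (1 / T) * log (∑ i ∈ s, exp (T * f i)) - log #s / T ≤ M := by
  have hlog := log_sum_exp_le_log_card_add hs fun i hi =>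
    mul_le_mul_of_nonneg_left (hf i hi) hT.le
  rw [one_div_mul_eq_div, ← sub_div, div_le_iff₀ hT]
  linarith

lemma abs_sum_mul_sub_sum_mul_le {ι : Type*} {s : Finset ι} {w x y : ι → ℝ} {M : ℝ}
    (hw0 : ∀ k ∈ s, 0 ≤ w k) (hw1 : ∑ k ∈ s, w k = 1)
    (hM : ∀ k ∈ s, |x k - y k| ≤ M) :
    |∑ k ∈ s, w k * x k - ∑ k ∈ s, w k * y k| ≤ M := by
  calc |∑ k ∈ s, w k * x k - ∑ k ∈ s, w k * y k|
      = |∑ k ∈ s, w k * (x k - y k)| := by simp only [← sum_sub_distrib, mul_sub]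
    _ ≤ ∑ k ∈ s, |w k * (x k - y k)| := abs_sum_le_sum_abs _ _
    _ ≤ ∑ k ∈ s, w k * M := sum_le_sum fun k hk => by
      rw [abs_mul, abs_of_nonneg (hw0 k hk)]
      exact mul_le_mul_of_nonneg_left (hM k hk) (hw0 k hk)
    _ = M := by rw [← sum_mul, hw1, one_mul]

lemma abs_sub_le_of_triangle {V : Type*} {d : V → V → ℝ} (hsymm : ∀ u v, d u v = d v u)
    (htri : ∀ u v w, d u w ≤ d u v + d v w) (a u t : V) : |d a u - d a t| ≤ d u t := by
  rw [abs_sub_le_iff]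
  have := htri a t u
  have := htri a u t
  have := hsymm t u
  constructor <;> linarith

theorem smooth_compressed_admissibility_chain_general {V : Type*} (d : V → V → ℝ)
    (hsymm : ∀ u v, d u v = d v u)
    (htri : ∀ u v w, d u w ≤ d u v + d v w)
    {K m : ℕ} (hK : 1 ≤ K) (hm : 1 ≤ m) (l : Fin K → V)
    (A : Fin m → Fin K → ℝ)
    (hA0 : ∀ i k, 0 ≤ A i k) (hA1 : ∀ i, ∑ k, A i k = 1)
    (T : ℝ) (hT : 0 < T) (u t : V) :
    ((1 / T) * Real.log (∑ i,
        Real.exp (T * |(∑ k, A i k * d (l k) u) - (∑ k, A i k * d (l k) t)|))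
        - Real.log m / T
      ≤ fmax hm (fun i => |(∑ k, A i k * d (l k) u) - (∑ k, A i k * d (l k) t)|)) ∧
    (fmax hm (fun i => |(∑ k, A i k * d (l k) u) - (∑ k, A i k * d (l k) t)|)
      ≤ fmax hK (fun k => |d (l k) u - d (l k) t|)) ∧
    (fmax hK (fun k => |d (l k) u - d (l k) t|) ≤ d u t) := by
  refine ⟨?_, fmax_le hm fun i => ?_,
    fmax_le hK fun k => abs_sub_le_of_triangle hsymm htri _ u t⟩
  · simpa using log_sum_exp_div_sub_log_card_div_le (univ_nonempty_iff.mpr ⟨⟨0, hm⟩⟩)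
      (fun i _ => le_fmax hm
        (fun i => |(∑ k, A i k * d (l k) u) - (∑ k, A i k * d (l k) t)|) i) hT
  · exact abs_sum_mul_sub_sum_mul_le (fun k _ => hA0 i k) (hA1 i)
      fun k _ => le_fmax hK (fun k => |d (l k) u - d (l k) t|) k

/-- End-to-end admissibility chain: the smooth compressed heuristic is
bounded by the hard compressed heuristic, which is bounded by the teacher
ALT heuristic, which is bounded by the distance. -/
theorem smooth_compressed_admissibility_chain {V : Type*} (d : V → V → ℝ)
    (hnn : ∀ u v, 0 ≤ d u v)
    (hsymm : ∀ u v, d u v = d v u)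
    (htri : ∀ u v w, d u w ≤ d u v + d v w)
    {K m : ℕ} (hK : 1 ≤ K) (hm : 1 ≤ m) (l : Fin K → V)
    (A : Fin m → Fin K → ℝ)
    (hA0 : ∀ i k, 0 ≤ A i k) (hA1 : ∀ i, ∑ k, A i k = 1)
    (T : ℝ) (hT : 0 < T) (u t : V) :
    ((1 / T) * Real.log (∑ i,
        Real.exp (T * |(∑ k, A i k * d (l k) u) - (∑ k, A i k * d (l k) t)|))
        - Real.log m / T
      ≤ fmax hm (fun i => |(∑ k, A i k * d (l k) u) - (∑ k, A i k * d (l k) t)|)) ∧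
    (fmax hm (fun i => |(∑ k, A i k * d (l k) u) - (∑ k, A i k * d (l k) t)|)
      ≤ fmax hK (fun k => |d (l k) u - d (l k) t|)) ∧
    (fmax hK (fun k => |d (l k) u - d (l k) t|) ≤ d u t) :=
  smooth_compressed_admissibility_chain_general d hsymm htri hK hm l A hA0 hA1 T hT u t
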